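/- There exist x_1, …, x_{d-1} ∈ F_{q^d}^× with x_d = 1 such that in F_{q^d}{τ} the factorization 1 − t = (1 − τ)(1 − x_{d-1}^{1−q}τ)···(1 − x_1^{1−q}τ) holds, where t = τ^d. -/

import Mathlib

/-!
Let `τ` act on `K` as the Frobenius `z ↦ z ^ q`, so that `y ∈ K{τ}` acts as the `𝔽_q`-linear
`q`-polynomial `z ↦ ∑ₙ cₙ(y) z^{qⁿ}`; the factor `1 - x^{1-q} τ` kills `𝔽_q x`.
Since `(1 - τ) T = 1 - τ^d` with `T = 1 + τ + ⋯ + τ^{d-1}`, and `1 - τ^d` acts as zero on `K`,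
`T` maps `K` into `𝔽_q`, so its kernel contains a subspace `W` with a basis `e₁, …, e_{d-1}`.
The products `Pₖ = (1 - x_k^{1-q} τ) ⋯ (1 - x_1^{1-q} τ)` with `x_{k+1} = Pₖ(e_{k+1})` kill
`⟨e₁, …, eₖ⟩`, and `x_{k+1} ≠ 0` because a `q`-polynomial of `q`-degree `k` has at most `q^k`
roots. The same root count shows that `P_{d-1}` and `T`, which agree in degree `0` and both kill
`W`, are equal; hence `1 - τ^d = (1 - τ) P_{d-1}`.
-/

/-- A characterization of the skew polynomial ring `K{τ}` (for `K = F_{q^d}`) with commutation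
rule `τ·λ = λ^q·τ`: a ring `R` together with coefficient maps `c n : R →+ K` such that elements
are uniquely determined by their (finitely supported) coefficients, every finitely supported
family of coefficients occurs, `1` and `τ` have the expected coefficients, and multiplication
is the twisted convolution `c_n(x·y) = Σ_{i=0}^n c_i(x)·c_{n-i}(y)^{q^i}` (which encodes
`τλ = λ^q τ`). -/
structure IsSkewPolyRing (q : ℕ) (K : Type) [Field K] (R : Type) [Ring R]
    (c : ℕ → R →+ K) (τ : R) : Prop where
  inj : Function.Injective fun (x : R) (n : ℕ) => c n x
  support_finite : ∀ x : R, (Function.support fun n => c n x).Finite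
  surj : ∀ f : ℕ →₀ K, ∃ x : R, ∀ n, c n x = f n
  coeff_one : ∀ n, c n (1 : R) = if n = 0 then 1 else 0
  coeff_tau : ∀ n, c n τ = if n = 1 then 1 else 0
  coeff_mul : ∀ x y : R, ∀ n,
    c n (x * y) = ∑ i ∈ Finset.range (n + 1), c i x * c (n - i) y ^ q ^ i

open Finset Polynomial FiniteField

theorem frobeniusAlgHom_pow_apply (Fq K : Type*) [Field Fq] [Fintype Fq] [Field K] [Algebra Fq K]
    (n : ℕ) (z : K) : (frobeniusAlgHom Fq K ^ n) z = z ^ Fintype.card Fq ^ n := by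
  rw [AlgHom.coe_pow, coe_frobeniusAlgHom, pow_iterate]

theorem coeff_eq_zero_of_sum_mul_pow_pow_eq_zero {K ι : Type*} [Field K] [Fintype ι] {q m : ℕ}
    (hq : 1 < q) {f : ι → K} (hf : Function.Injective f) (hcard : q ^ m ≤ Fintype.card ι)
    {a : ℕ → K} (ha : ∀ i, ∑ n ∈ range m, a n * f i ^ q ^ n = 0) : ∀ n < m, a n = 0 := by
  intro n hn
  set P : K[X] := ∑ n ∈ range m, C (a n) * X ^ q ^ n
  have hP : P = 0 := by
    refine eq_zero_of_natDegree_lt_card_of_eval_eq_zero P hf (fun i => ?_) ?_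
    · simpa [P, eval_finsetSum] using ha i
    · refine lt_of_le_of_lt (natDegree_sum_le_of_forall_le _ _ (n := q ^ (m - 1)) ?_) ?_
      · intro n hn
        exact (natDegree_C_mul_X_pow_le _ _).trans
          (Nat.pow_le_pow_right (by omega) (Nat.le_sub_one_of_lt (mem_range.mp hn)))
      · exact lt_of_lt_of_le (Nat.pow_lt_pow_right hq (by omega)) hcard
  have hcoeff : P.coeff (q ^ n) = a n := by
    simp only [P, finsetSum_coeff, coeff_C_mul_X_pow, (Nat.pow_right_injective hq).eq_iff]
    simp [hn]
  rw [← hcoeff, hP, coeff_zero]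

theorem finrank_le_one_of_forall_pow_card_eq_self {Fq K : Type*} [Field Fq] [Fintype Fq] [Field K]
    [Fintype K] [Algebra Fq K] (W : Submodule Fq K) (hW : ∀ w ∈ W, w ^ Fintype.card Fq = w) :
    Module.finrank Fq W ≤ 1 := by
  classical
  have hq := Fintype.one_lt_card (α := Fq)
  have hcard : Fintype.card W ≤ Fintype.card Fq := by
    by_contra! hlt
    refine X_pow_card_sub_X_ne_zero K hq (eq_zero_of_natDegree_lt_card_of_eval_eq_zero _
      (f := ((↑) : W → K)) Subtype.val_injective (fun w => ?_) ?_)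
    · simp [hW w w.2]
    · rwa [X_pow_card_sub_X_natDegree_eq K hq]
  rw [Module.card_eq_pow_finrank (K := Fq)] at hcard
  exact (Nat.pow_le_pow_iff_right hq).mp (by simpa using hcard)

theorem LinearMap.exists_apply_eq_smul_of_mem_span_insert {F V W : Type*} [Field F]
    [AddCommGroup V] [Module F V] [AddCommGroup W] [Module F W] (L : V →ₗ[F] W) {e : V}
    {S : Set V} (hS : ∀ v ∈ Submodule.span F S, L v = 0) {z : V}
    (hz : z ∈ Submodule.span F (insert e S)) : ∃ a : F, L z = a • L e := by
  obtain ⟨a, v, hv, rfl⟩ := Submodule.mem_span_insert.mp hz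
  exact ⟨a, by rw [map_add, map_smul, hS v hv, add_zero]⟩

namespace IsSkewPolyRing

variable {q : ℕ} {K R : Type} [Field K] [Ring R] {c : ℕ → R →+ K} {τ : R}

/-- The action of `K{τ}` on `K` in which `τ` acts as `z ↦ z ^ q`. -/
noncomputable def skewEval (q : ℕ) (c : ℕ → R →+ K) (y : R) (z : K) : K :=
  ∑ᶠ n, c n y * z ^ q ^ n

def DegreeLE (c : ℕ → R →+ K) (y : R) (m : ℕ) : Prop := ∀ n, m < n → c n y = 0

theorem skewEval_eq_sum {y : R} {m : ℕ} (hy : DegreeLE c y m) (z : K) :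
    skewEval q c y z = ∑ n ∈ range (m + 1), c n y * z ^ q ^ n := by
  refine finsum_eq_sum_of_support_subset _ fun n hn => ?_
  by_contra hnm
  simp_all [hy n (by simpa using hnm)]

/-- `(1 - b_k τ) ⋯ (1 - b_1 τ)`. -/
def factorProd (ι : K →+* R) (τ : R) (b : ℕ → K) (k : ℕ) : R :=
  (List.ofFn fun j : Fin k => 1 - ι (b (k - j)) * τ).prod

theorem factorProd_succ (ι : K →+* R) (τ : R) (b : ℕ → K) (k : ℕ) :
    factorProd ι τ b (k + 1) = (1 - ι (b (k + 1)) * τ) * factorProd ι τ b k := by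
  simp [factorProd, List.ofFn_succ]

theorem factorProd_congr (ι : K →+* R) (τ : R) {b b' : ℕ → K} {k : ℕ}
    (hb : ∀ i, 1 ≤ i → i ≤ k → b i = b' i) : factorProd ι τ b k = factorProd ι τ b' k := by
  induction k with
  | zero => rfl
  | succ k ih =>
    rw [factorProd_succ, factorProd_succ, hb (k + 1) (by omega) le_rfl,
      ih fun i h1 h2 => hb i h1 (by omega)]

theorem exists_skewEval_ne_zero {Fq : Type} [Field Fq] [Fintype Fq] [Fintype K] [Algebra Fq K]
    (hq : q = Fintype.card Fq) {y : R} {m : ℕ} (hy : DegreeLE c y m) (hy0 : c 0 y ≠ 0)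
    (W : Submodule Fq K) (hW : Module.finrank Fq W = m + 1) :
    ∃ z ∈ W, skewEval q c y z ≠ 0 := by
  classical
  by_contra! hzero
  refine hy0 (coeff_eq_zero_of_sum_mul_pow_pow_eq_zero (f := ((↑) : W → K)) (m := m + 1)
    (a := fun n => c n y) (hq ▸ Fintype.one_lt_card) Subtype.val_injective ?_ (fun w => ?_) 0
    (by omega))
  · rw [Module.card_eq_pow_finrank (K := Fq), hW, hq]
  · rw [← skewEval_eq_sum hy]
    exact hzero w w.2

variable (h : IsSkewPolyRing q K R c τ)
include h

theorem finite_support_mul (y : R) (g : ℕ → K) : (Function.support fun n => c n y * g n).Finite :=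
  (h.support_finite y).subset (Function.support_mul_subset_left _ _)

theorem exists_degreeLE (y : R) : ∃ m, DegreeLE c y m := by
  obtain ⟨m, hm⟩ := (h.support_finite y).bddAbove
  exact ⟨m, fun n hn => by_contra fun hne => absurd (hm hne) (by omega)⟩

theorem coeff_zero_tau_mul (y : R) : c 0 (τ * y) = 0 := by
  simp [h.coeff_mul, h.coeff_tau]

theorem coeff_succ_tau_mul (y : R) (n : ℕ) : c (n + 1) (τ * y) = c n y ^ q := by
  rw [h.coeff_mul, Finset.sum_eq_single 1]
  · simp [h.coeff_tau]
  · intro i _ hi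
    simp [h.coeff_tau, hi]
  · simp

theorem coeff_tau_pow (hq : q ≠ 0) (k n : ℕ) : c n (τ ^ k) = if n = k then 1 else 0 := by
  induction k generalizing n with
  | zero => simpa using h.coeff_one n
  | succ k ih =>
    rw [pow_succ']
    cases n with
    | zero => simp [h.coeff_zero_tau_mul]
    | succ n => simp [h.coeff_succ_tau_mul, ih, ite_pow, zero_pow hq]

theorem coeff_geom_sum (hq : q ≠ 0) (d n : ℕ) :
    c n (∑ i ∈ range d, τ ^ i) = if n < d then 1 else 0 := by
  simp [map_sum, h.coeff_tau_pow hq]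

theorem skewEval_sub (x y : R) (z : K) :
    skewEval q c (x - y) z = skewEval q c x z - skewEval q c y z := by
  simp only [skewEval, map_sub, sub_mul]
  exact finsum_sub_distrib (h.finite_support_mul x _) (h.finite_support_mul y _)

theorem skewEval_one (z : K) : skewEval q c 1 z = z := by
  rw [skewEval_eq_sum (m := 0) fun n hn => by simp [h.coeff_one, hn.ne']]
  simp [h.coeff_one]

theorem eq_of_skewEval_eq {Fq : Type} [Field Fq] [Fintype Fq] [Fintype K] [Algebra Fq K]
    (hq : q = Fintype.card Fq) {f g : R} {m : ℕ} (hf : DegreeLE c f m) (hg : DegreeLE c g m)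
    (h0 : c 0 f = c 0 g) (W : Submodule Fq K) (hW : Module.finrank Fq W = m)
    (hfg : ∀ z ∈ W, skewEval q c f z = skewEval q c g z) : f = g := by
  classical
  have hfrob : Function.Injective fun w : W => (w : K) ^ q := by
    subst hq
    exact (frobeniusAlgHom Fq K).toRingHom.injective.comp Subtype.val_injective
  -- `f - g` has no constant term, so on `W` it is a `q`-polynomial of `q`-degree `< m` in `z ^ q`.
  have hcoeff := coeff_eq_zero_of_sum_mul_pow_pow_eq_zero (m := m)
    (a := fun n => c (n + 1) f - c (n + 1) g) (hq ▸ Fintype.one_lt_card) hfrob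
    (by rw [Module.card_eq_pow_finrank (K := Fq), hW, hq]) fun w => by
      have hw := hfg w w.2
      rw [skewEval_eq_sum hf, skewEval_eq_sum hg, sum_range_succ', sum_range_succ', h0,
        add_left_inj] at hw
      simp only [sub_mul, sum_sub_distrib, ← pow_mul, ← pow_succ', hw, sub_self]
  refine h.inj (funext fun n => ?_)
  rcases n with _ | n
  · exact h0
  · by_cases hn : n < m
    · exact sub_eq_zero.mp (hcoeff n hn)
    · simp only [hf _ (by omega : m < n + 1), hg _ (by omega : m < n + 1)]

section Frobenius

variable {Fq : Type} [Field Fq] [Fintype Fq] [Algebra Fq K] (hq : q = Fintype.card Fq)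
include hq

theorem skewEval_tau_mul (y : R) (z : K) : skewEval q c (τ * y) z = skewEval q c y z ^ q := by
  obtain ⟨m, hm⟩ := h.exists_degreeLE y
  have hτm : DegreeLE c (τ * y) (m + 1) := by
    rintro (_ | n) hn
    · omega
    · rw [h.coeff_succ_tau_mul, hm n (by omega), zero_pow (hq ▸ Fintype.card_ne_zero)]
  rw [skewEval_eq_sum hm, skewEval_eq_sum hτm, sum_range_succ', h.coeff_zero_tau_mul, zero_mul,
    add_zero]
  subst hq
  conv_rhs => rw [← frobeniusAlgHom_apply Fq K, map_sum]
  simp [h.coeff_succ_tau_mul, pow_succ, pow_mul, mul_pow]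

theorem skewEval_tau_pow (k : ℕ) (z : K) : skewEval q c (τ ^ k) z = z ^ q ^ k := by
  induction k with
  | zero => simp [h.skewEval_one]
  | succ k ih => rw [pow_succ', h.skewEval_tau_mul hq, ih, ← pow_mul, ← pow_succ]

noncomputable def skewEvalₗ (y : R) : K →ₗ[Fq] K where
  toFun := skewEval q c y
  map_add' z w := by
    subst hq
    simp only [skewEval, ← frobeniusAlgHom_pow_apply Fq K, map_add, mul_add]
    exact finsum_add_distrib (h.finite_support_mul y _) (h.finite_support_mul y _)
  map_smul' a z := by
    subst hq
    simp only [skewEval, ← frobeniusAlgHom_pow_apply Fq K, map_smul, mul_smul_comm,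
      RingHom.id_apply, smul_finsum]

theorem skewEvalₗ_apply (y : R) (z : K) : h.skewEvalₗ hq y z = skewEval q c y z := rfl

theorem pow_skewEval_geom_sum [Fintype K] {d : ℕ} (hK : Fintype.card K = q ^ d) (z : K) :
    skewEval q c (∑ i ∈ range d, τ ^ i) z ^ q = skewEval q c (∑ i ∈ range d, τ ^ i) z := by
  have hz := congr_arg (skewEval q c · z) (mul_neg_geom_sum τ d)
  simp only [sub_mul, one_mul, h.skewEval_sub, h.skewEval_tau_mul hq, h.skewEval_one,
    h.skewEval_tau_pow hq, ← hK, FiniteField.pow_card, sub_self] at hz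
  exact (sub_eq_zero.mp hz).symm

theorem le_finrank_ker_skewEvalₗ_geom_sum [Fintype K] {m : ℕ}
    (hK : Fintype.card K = q ^ (m + 1)) :
    m ≤ Module.finrank Fq (LinearMap.ker (h.skewEvalₗ hq (∑ i ∈ range (m + 1), τ ^ i))) := by
  have hrank := LinearMap.finrank_range_add_finrank_ker
    (h.skewEvalₗ hq (∑ i ∈ range (m + 1), τ ^ i))
  have hK' : Module.finrank Fq K = m + 1 := by
    rw [Module.card_eq_pow_finrank (K := Fq), ← hq] at hK
    exact Nat.pow_right_injective (hq ▸ Fintype.one_lt_card) hK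
  have hrange := finrank_le_one_of_forall_pow_card_eq_self
    (LinearMap.range (h.skewEvalₗ hq (∑ i ∈ range (m + 1), τ ^ i))) (by
      rintro _ ⟨z, rfl⟩
      rw [← hq]
      exact h.pow_skewEval_geom_sum hq hK z)
  omega

end Frobenius

variable {ι : K →+* R} (hι : ∀ (a : K) (n : ℕ), c n (ι a) = if n = 0 then a else 0)
include hι

theorem coeff_ι_mul (a : K) (y : R) (n : ℕ) : c n (ι a * y) = a * c n y := by
  rw [h.coeff_mul, Finset.sum_eq_single 0]
  · simp [hι]
  · intro i _ hi
    simp [hι, hi]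
  · simp

theorem coeff_one_sub_mul (a : K) (y : R) (n : ℕ) :
    c n ((1 - ι a * τ) * y) = c n y - a * c n (τ * y) := by
  rw [sub_mul, one_mul, mul_assoc, map_sub, h.coeff_ι_mul hι]

theorem coeff_zero_factorProd (b : ℕ → K) (k : ℕ) : c 0 (factorProd ι τ b k) = 1 := by
  induction k with
  | zero => simp [factorProd, h.coeff_one]
  | succ k ih =>
    rw [factorProd_succ, h.coeff_one_sub_mul hι, ih, h.coeff_zero_tau_mul, mul_zero, sub_zero]

theorem degreeLE_factorProd (hq : q ≠ 0) (b : ℕ → K) (k : ℕ) :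
    DegreeLE c (factorProd ι τ b k) k := by
  induction k with
  | zero => exact fun n hn => by simp [factorProd, h.coeff_one, hn.ne']
  | succ k ih =>
    rintro (_ | n) hn
    · omega
    · rw [factorProd_succ, h.coeff_one_sub_mul hι, h.coeff_succ_tau_mul, ih n (by omega),
        ih (n + 1) (by omega), zero_pow hq, mul_zero, sub_zero]

theorem skewEval_ι_mul (a : K) (y : R) (z : K) :
    skewEval q c (ι a * y) z = a * skewEval q c y z := by
  simp only [skewEval, h.coeff_ι_mul hι, mul_finsum, mul_assoc]

variable {Fq : Type} [Field Fq] [Fintype Fq] [Algebra Fq K] (hq : q = Fintype.card Fq)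
include hq

theorem skewEval_one_sub_mul (a : K) (y : R) (z : K) :
    skewEval q c ((1 - ι a * τ) * y) z = skewEval q c y z - a * skewEval q c y z ^ q := by
  rw [sub_mul, one_mul, mul_assoc, h.skewEval_sub, h.skewEval_ι_mul hι, h.skewEval_tau_mul hq]

theorem skewEval_one_sub_zpow_mul_eq_zero {y : R} {z w : K} (hw : w ≠ 0) {a : Fq}
    (hyz : skewEval q c y z = a • w) :
    skewEval q c ((1 - ι (w ^ ((1 : ℤ) - q)) * τ) * y) z = 0 := by
  have hfrob : (a • w) ^ q = a • w ^ q := by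
    subst hq
    exact map_smul (frobeniusAlgHom Fq K) a w
  rw [h.skewEval_one_sub_mul hι hq, hyz, hfrob, mul_smul_comm, ← zpow_natCast,
    ← zpow_add₀ hw]
  simp

theorem exists_skewEval_factorProd_eq_zero [Fintype K] (k : ℕ) (e : Fin k → K)
    (he : LinearIndependent Fq e) :
    ∃ x : ℕ → K, (∀ i, 1 ≤ i → i ≤ k → x i ≠ 0) ∧
      ∀ z ∈ Submodule.span Fq (Set.range e),
        skewEval q c (factorProd ι τ (fun i => x i ^ ((1 : ℤ) - q)) k) z = 0 := by
  induction k with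
  | zero =>
    refine ⟨1, fun i h1 h2 => by omega, fun z hz => ?_⟩
    simp only [Set.range_eq_empty, Submodule.span_empty, Submodule.mem_bot] at hz
    rw [hz, ← h.skewEvalₗ_apply hq, map_zero]
  | succ k ih =>
    rw [← Fin.snoc_init_self e] at he ⊢
    obtain ⟨x, hx0, hxW⟩ := ih (Fin.init e) (linearIndependent_finSnoc.mp he).1
    set P := factorProd ι τ (fun i => x i ^ ((1 : ℤ) - q)) k
    set w := skewEval q c P (e (Fin.last k))
    set W := Submodule.span Fq (Set.range (Fin.snoc (Fin.init e) (e (Fin.last k))))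
    have hPW : ∀ z ∈ W, ∃ a : Fq, skewEval q c P z = a • w := fun z hz =>
      (h.skewEvalₗ hq P).exists_apply_eq_smul_of_mem_span_insert hxW
        (by simpa only [W, Fin.range_snoc] using hz)
    have hw : w ≠ 0 := by
      obtain ⟨z, hz, hPz⟩ := exists_skewEval_ne_zero hq (y := P)
        (h.degreeLE_factorProd hι (hq ▸ Fintype.card_ne_zero) _ k)
        (by rw [h.coeff_zero_factorProd hι]; exact one_ne_zero) W
        (by rw [finrank_span_eq_card he, Fintype.card_fin])
      obtain ⟨a, ha⟩ := hPW z hz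
      exact fun hw0 => hPz (by rw [ha, hw0, smul_zero])
    refine ⟨Function.update x (k + 1) w, fun i h1 h2 => ?_, fun z hz => ?_⟩
    · rcases eq_or_lt_of_le h2 with rfl | hi
      · simpa using hw
      · rw [Function.update_of_ne (by omega)]
        exact hx0 i h1 (by omega)
    · obtain ⟨a, ha⟩ := hPW z hz
      rw [factorProd_succ, factorProd_congr ι τ (b := fun i => Function.update x (k + 1) w i ^ _)
        (b' := fun i => x i ^ ((1 : ℤ) - q)) fun i _ hi => by
          rw [Function.update_of_ne (by omega)], Function.update_self]
      exact h.skewEval_one_sub_zpow_mul_eq_zero hι hq hw ha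

end IsSkewPolyRing

open IsSkewPolyRing

/-- There exist `x_1, …, x_{d-1} ∈ F_{q^d}^×` (and `x_d = 1`) such that in the
skew polynomial ring `F_{q^d}{τ}` (with `t = τ^d` central) one has the factorization
`1 − t = (1 − τ)(1 − x_{d-1}^{1−q} τ) ⋯ (1 − x_1^{1−q} τ)`.
Here `ι : F_{q^d} →+* R` is the constant embedding, characterized on coefficients. -/
theorem factorization_one_sub_t
    (Fq K R : Type) [Field Fq] [Fintype Fq] [Field K] [Fintype K] [Algebra Fq K] [Ring R]
    (q d : ℕ) (hq : q = Fintype.card Fq) (hd : 0 < d) (hK : Fintype.card K = q ^ d)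
    (c : ℕ → R →+ K) (τ : R) (h : IsSkewPolyRing q K R c τ)
    (ι : K →+* R) (hι : ∀ (a : K) (n : ℕ), c n (ι a) = if n = 0 then a else 0) :
    ∃ x : ℕ → K, x d = 1 ∧ (∀ i, 1 ≤ i → i < d → x i ≠ 0) ∧
      1 - τ ^ d =
        (List.ofFn fun j : Fin d =>
          1 - ι (x (d - (j : ℕ)) ^ ((1 : ℤ) - (q : ℤ))) * τ).prod := by
  obtain ⟨m, rfl⟩ : ∃ m, d = m + 1 := ⟨d - 1, by omega⟩
  have hq0 : q ≠ 0 := hq ▸ Fintype.card_ne_zero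
  obtain ⟨e, he⟩ :=
    exists_linearIndependent_of_le_finrank (h.le_finrank_ker_skewEvalₗ_geom_sum hq hK)
  have he' : LinearIndependent Fq fun i => (e i : K) := he.map' _ (Submodule.ker_subtype _)
  obtain ⟨x, hx0, hxW⟩ := h.exists_skewEval_factorProd_eq_zero hι hq m _ he'
  have hPT : factorProd ι τ (fun i => x i ^ ((1 : ℤ) - q)) m =
      ∑ i ∈ range (m + 1), τ ^ i := by
    refine h.eq_of_skewEval_eq hq (h.degreeLE_factorProd hι hq0 _ m)
      (fun n hn => by simp [h.coeff_geom_sum hq0, hn])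
      (by simp [h.coeff_zero_factorProd hι, h.coeff_geom_sum hq0]) _
      (by rw [finrank_span_eq_card he', Fintype.card_fin]) fun z hz => ?_
    have hzker := Submodule.span_le.mpr (by rintro _ ⟨i, rfl⟩; exact (e i).2) hz
    rw [hxW z hz, ← h.skewEvalₗ_apply hq, LinearMap.mem_ker.mp hzker]
  refine ⟨Function.update x (m + 1) 1, by simp, fun i h1 h2 => ?_, ?_⟩
  · rw [Function.update_of_ne (by omega)]
    exact hx0 i h1 (by omega)
  · change 1 - τ ^ (m + 1) = factorProd ι τ (fun i => Function.update x (m + 1) 1 i ^ _) (m + 1)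
    rw [factorProd_succ, factorProd_congr ι τ (b' := fun i => x i ^ ((1 : ℤ) - q))
      fun i _ hi => by rw [Function.update_of_ne (by omega)], hPT, Function.update_self,
      one_zpow, map_one, one_mul, mul_neg_geom_sum]
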